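/- Let n ≥ 2 and 1 ≤ k ≤ 2^{n−1}. Then v^n(k) = (k − 1) · 2^{C(n−1,2)} + λ#_{n−1}(k − 1), where λ#_{n−1}(k − 1) = code(λ(decode_{n−1}(k − 1))) is computed using the (n−1)-bit binary representation of k − 1. -/

import Mathlib

/-- Integer encoding of a binary vector (MSB first): code(x) = Σ x_j 2^(m-j). -/
def code (x : List Bool) : ℕ := x.foldl (fun a b => 2 * a + (if b then 1 else 0)) 0

/-- m-bit binary representation (MSB first) of an integer k. -/
def decode (m k : ℕ) : List Bool := (List.range m).map (fun j => k.testBit (m - 1 - j))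

/-- Agreement-indicator map: λ(x) lists 𝟙(x_i = x_j) for pairs i < j in lex order. -/
def lam : List Bool → List Bool
  | [] => []
  | a :: t => (t.map (fun b => a == b)) ++ lam t

/-- Integer-level map λ#_n. -/
def lambdaSharp (n k : ℕ) : ℕ := code (lam (decode n k))

/-- Encoded vertices of 𝟙-CUT(n): v^n(k) = λ#_n(2^(n-1) + k - 1). -/
def v (n k : ℕ) : ℕ := lambdaSharp n (2 ^ (n - 1) + k - 1)

/-!
The leading bit of `2^(n-1) + (k-1)` is `1` and its remaining `n-1` bits are those of `k-1`.
Since `λ(1 :: y) = y ++ λ(y)`, the code of `λ` is the code of `y = decode_{n-1}(k-1)`, i.e. `k-1`,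
shifted past the `C(n-1,2)` bits of `λ(y)`, plus `λ#_{n-1}(k-1)`.
-/

lemma foldl_eq_mul_pow_add_code (l : List Bool) (a : ℕ) :
    l.foldl (fun a b => 2 * a + (if b then 1 else 0)) a = a * 2 ^ l.length + code l := by
  induction l generalizing a with
  | nil => simp [code]
  | cons b t ih =>
    simp only [List.foldl_cons, List.length_cons, code]
    rw [ih, ih (2 * 0 + _)]
    ring

lemma code_append (x y : List Bool) : code (x ++ y) = code x * 2 ^ y.length + code y := by
  rw [code, List.foldl_append, foldl_eq_mul_pow_add_code]
  rfl

lemma code_cons (b : Bool) (l : List Bool) :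
    code (b :: l) = (if b then 1 else 0) * 2 ^ l.length + code l := by
  rw [← List.singleton_append, code_append]
  simp [code]

lemma length_decode (m k : ℕ) : (decode m k).length = m := by
  simp [decode]

lemma length_lam (l : List Bool) : (lam l).length = l.length.choose 2 := by
  induction l with
  | nil => simp [lam]
  | cons a t ih => simp [lam, ih, Nat.choose_succ_succ]

lemma lam_true_cons (l : List Bool) : lam (true :: l) = l ++ lam l := by
  simp [lam]

lemma decode_succ (m k : ℕ) : decode (m + 1) k = k.testBit m :: decode m k := by
  rw [decode, List.range_succ_eq_map, List.map_cons, List.map_map]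
  congr 1
  refine List.map_congr_left fun j _ => ?_
  simp only [Function.comp_apply]
  congr 1
  omega

lemma decode_mod_two_pow (m k : ℕ) : decode m (k % 2 ^ m) = decode m k := by
  refine List.map_congr_left fun j hj => ?_
  rw [List.mem_range] at hj
  rw [Nat.testBit_mod_two_pow, decide_eq_true (by omega : m - 1 - j < m), Bool.true_and]

lemma code_decode (m k : ℕ) : code (decode m k) = k % 2 ^ m := by
  induction m with
  | zero => simp [decode, code, Nat.mod_one]
  | succ m ih =>
    rw [decode_succ, code_cons, length_decode, ih, pow_succ, Nat.mod_mul,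
      Nat.testBit_eq_decide_div_mod_eq]
    rcases Nat.mod_two_eq_zero_or_one (k / 2 ^ m) with h | h <;> simp [h, add_comm, mul_comm]

lemma decode_two_pow_add {m j : ℕ} (hj : j < 2 ^ m) :
    decode (m + 1) (2 ^ m + j) = true :: decode m j := by
  rw [decode_succ, ← decode_mod_two_pow m (2 ^ m + j), Nat.add_mod_left, Nat.mod_eq_of_lt hj,
    Nat.testBit_two_pow_add_eq, Nat.testBit_lt_two_pow hj, Bool.not_false]

lemma lambdaSharp_two_pow_add {m j : ℕ} (hj : j < 2 ^ m) :
    lambdaSharp (m + 1) (2 ^ m + j) = j * 2 ^ m.choose 2 + lambdaSharp m j := by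
  rw [lambdaSharp, decode_two_pow_add hj, lam_true_cons, code_append, code_decode,
    Nat.mod_eq_of_lt hj, length_lam, length_decode, lambdaSharp]

theorem stmt_7 (n : ℕ) (hn : 2 ≤ n) (k : ℕ) (hk : 1 ≤ k) (hk2 : k ≤ 2 ^ (n - 1)) :
    v n k = (k - 1) * 2 ^ Nat.choose (n - 1) 2 + lambdaSharp (n - 1) (k - 1) := by
  obtain ⟨m, rfl⟩ : ∃ m, n = m + 1 := ⟨n - 1, by omega⟩
  rw [Nat.add_sub_cancel] at hk2 ⊢
  rw [v, Nat.add_sub_cancel, Nat.add_sub_assoc hk]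
  exact lambdaSharp_two_pow_add (by omega)
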